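/- Let λ₁ > 0, λ₂ > 0, α > 0 and θ ∈ [-1, 1], let D = λ₂α/(λ₁+λ₂α) + θλ₁·(2/(2λ₁+λ₂α) + 1/(λ₁+2λ₂α) - 2/(λ₁+λ₂α)) and K = λ₁/D, and for z, y > 0 let f_{Z,Y}(z,y) = λ₁λ₂ z e^{-(λ₁+λ₂y)z}(1 + θ(1 - 2e^{-λ₁z})(1 - 2e^{-λ₂yz})). Then for every x > 0, (∫₀^α f_{Z,Y}(x,y) dy) / D = K e^{-λ₁x}(1 - e^{-λ₂αx})(1 - θe^{-λ₂αx}(1 - 2e^{-λ₁x})); that is, the density of Z conditional on Y ≤ α equals the GWED density f^w. -/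

import Mathlib

/-!
For fixed `z`, with `c = λ₂ z` and `β = θ (1 - 2 e^{-λ₁ z})`, the integrand in `y` is
`λ₁ e^{-λ₁ z} ((1 + β) c e^{-c y} - β (2c) e^{-2c y})`, a signed mixture of two exponential
densities. Integrating over `[0, α]` gives `(1 + β)(1 - b) - β (1 - b²) = (1 - b)(1 - β b)`
with `b = e^{-c α}`, which is the GWED density times `D`.
-/

open MeasureTheory Real

theorem integral_mul_exp_neg_mul (c α : ℝ) :
    ∫ y in (0 : ℝ)..α, c * exp (-(c * y)) = 1 - exp (-(c * α)) := by
  have hF : ∀ y, HasDerivAt (fun y => -exp (-(c * y))) (c * exp (-(c * y))) y := fun y => by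
    simpa [mul_comm] using (((hasDerivAt_id y).const_mul c).fun_neg.exp).fun_neg
  rw [intervalIntegral.integral_eq_sub_of_hasDerivAt (fun y _ => hF y)
    ((by fun_prop : Continuous fun y => c * exp (-(c * y))).intervalIntegrable 0 α)]
  simp only [mul_zero, neg_zero, exp_zero]
  ring

theorem integral_exp_mixture (c α β : ℝ) :
    ∫ y in (0 : ℝ)..α, ((1 + β) * (c * exp (-(c * y))) - β * (2 * c * exp (-(2 * c * y))))
      = (1 - exp (-(c * α))) * (1 - β * exp (-(c * α))) := by
  have hsq : exp (-(2 * c * α)) = exp (-(c * α)) ^ 2 := by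
    rw [← exp_nat_mul]; ring_nf
  rw [intervalIntegral.integral_sub, intervalIntegral.integral_const_mul (1 + β),
    intervalIntegral.integral_const_mul β, integral_mul_exp_neg_mul,
    integral_mul_exp_neg_mul, hsq]
  · ring
  all_goals exact (by fun_prop : Continuous _).intervalIntegrable 0 α

theorem hiddenTruncation_integrand_eq (l₁ l₂ θ z y : ℝ) :
    l₁ * l₂ * z * exp (-(l₁ + l₂ * y) * z)
        * (1 + θ * (1 - 2 * exp (-l₁ * z)) * (1 - 2 * exp (-l₂ * y * z)))
      = l₁ * exp (-l₁ * z)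
        * ((1 + θ * (1 - 2 * exp (-l₁ * z))) * (l₂ * z * exp (-(l₂ * z * y)))
          - θ * (1 - 2 * exp (-l₁ * z)) * (2 * (l₂ * z) * exp (-(2 * (l₂ * z) * y)))) := by
  have h₁ : exp (-(l₁ + l₂ * y) * z) = exp (-l₁ * z) * exp (-(l₂ * z * y)) := by
    rw [← exp_add]; ring_nf
  have h₂ : exp (-(2 * (l₂ * z) * y)) = exp (-(l₂ * z * y)) ^ 2 := by
    rw [← exp_nat_mul]; ring_nf
  have h₃ : exp (-l₂ * y * z) = exp (-(l₂ * z * y)) := by ring_nf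
  rw [h₁, h₂, h₃]
  ring

theorem gwed_hidden_truncation_density
    (l₁ l₂ α θ : ℝ) (hα : 0 < α)
    (D K : ℝ)
    (hK : K = l₁ / D)
    (f : ℝ → ℝ → ℝ)
    (hf : ∀ z y : ℝ, 0 < z → 0 < y →
      f z y = l₁ * l₂ * z * Real.exp (-(l₁ + l₂ * y) * z)
        * (1 + θ * (1 - 2 * Real.exp (-l₁ * z)) * (1 - 2 * Real.exp (-l₂ * y * z)))) :
    ∀ x : ℝ, 0 < x →
      (∫ y in (0 : ℝ)..α, f x y) / D
        = K * Real.exp (-l₁ * x) * (1 - Real.exp (-l₂ * α * x))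
          * (1 - θ * Real.exp (-l₂ * α * x) * (1 - 2 * Real.exp (-l₁ * x))) := by
  intro x hx
  have hmix : ∫ y in (0 : ℝ)..α, f x y = l₁ * exp (-l₁ * x) * ∫ y in (0 : ℝ)..α,
      ((1 + θ * (1 - 2 * exp (-l₁ * x))) * (l₂ * x * exp (-(l₂ * x * y)))
        - θ * (1 - 2 * exp (-l₁ * x)) * (2 * (l₂ * x) * exp (-(2 * (l₂ * x) * y)))) := by
    rw [← intervalIntegral.integral_const_mul]
    refine intervalIntegral.integral_congr_ae (Filter.Eventually.of_forall fun y hy => ?_)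
    rw [Set.uIoc_of_le hα.le] at hy
    rw [hf x y hx hy.1, hiddenTruncation_integrand_eq]
  have hb : exp (-(l₂ * x * α)) = exp (-l₂ * α * x) := by ring_nf
  rw [hmix, integral_exp_mixture, hb, hK]
  ring
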